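/- arXiv:2301.08570 — 6 statements merged into one kernel-verified Lean document; each statement's English description precedes it below -/
import Mathlib

section
/- For every finite-state machine N = (S, A, T), if R1 and R2 are branching bisimulations on N, then their relational composition R1 ∘ R2 = { (s, s'') | ∃ s'. (s, s') ∈ R1 ∧ (s', s'') ∈ R2 } is a branching bisimulation. -/
set_option linter.unusedSectionVars false
set_option linter.unnecessarySeqFocus false


/- Common framework: finite-state machines (FSMs) in the sense of Gorrieri.
   Places form a type `S`, labels a type `A` with a distinguished silent label `tau`.
   A transition is a triple `(s, ℓ, m) : S × A × Option S`, where the post-set `m`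
   is either a single place (`some s'`) or the empty marking θ (`none`).
   An FSM is given by a finite set `T` of such transitions. -/

variable {S A : Type*}

/-- `Tr T s ℓ m` : place `s` has a transition labeled `ℓ` to post-set `m` (a place or θ). -/
def Tr (T : Finset (S × A × Option S)) (s : S) (ℓ : A) (m : Option S) : Prop :=
  (s, ℓ, m) ∈ T

/-- `SilentReach T tau s m` : `s ⇒ε m`, the reflexive–transitive closure of silent moves. -/
inductive SilentReach (T : Finset (S × A × Option S)) (tau : A) : S → Option S → Prop
  | refl (s : S) : SilentReach T tau s (some s)
  | step {s s' : S} {m : Option S} :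
      SilentReach T tau s (some s') → Tr T s' tau m → SilentReach T tau s m

/-- Lift of a place relation to `Option S`; a pair involving θ (`none`) is related
    only when both components are θ. -/
def OptRel (R : S → S → Prop) : Option S → Option S → Prop
  | some a, some b => R a b
  | none, none => True
  | _, _ => False

/-- `R` is a branching bisimulation on the FSM with transitions `T` and silent label `tau`. -/
def IsBranchingBisim (T : Finset (S × A × Option S)) (tau : A) (R : S → S → Prop) : Prop :=
  ∀ s1 s2, R s1 s2 →
    (∀ ℓ m1, Tr T s1 ℓ m1 →
        (ℓ = tau ∧ ∃ m2, SilentReach T tau s2 m2 ∧ OptRel R (some s1) m2 ∧ OptRel R m1 m2) ∨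
        (∃ s m2, SilentReach T tau s2 (some s) ∧ Tr T s ℓ m2 ∧ R s1 s ∧ OptRel R m1 m2)) ∧
    (∀ ℓ m2, Tr T s2 ℓ m2 →
        (ℓ = tau ∧ ∃ m1, SilentReach T tau s1 m1 ∧ OptRel R m1 (some s2) ∧ OptRel R m1 m2) ∨
        (∃ s m1, SilentReach T tau s1 (some s) ∧ Tr T s ℓ m1 ∧ R s s2 ∧ OptRel R m1 m2))

/-- Branching bisimilarity on places: `s ≈ s'` iff some branching bisimulation relates them. -/
def Bisimilar (T : Finset (S × A × Option S)) (tau : A) (s s' : S) : Prop :=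
  ∃ R, IsBranchingBisim T tau R ∧ R s s'

/-- Rooted branching bisimilarity `≈_c` on places. -/
def RootedBisimilar (T : Finset (S × A × Option S)) (tau : A) (s1 s2 : S) : Prop :=
  ∀ ℓ : A,
    (∀ m1, Tr T s1 ℓ m1 → ∃ m2, Tr T s2 ℓ m2 ∧ OptRel (Bisimilar T tau) m1 m2) ∧
    (∀ m2, Tr T s2 ℓ m2 → ∃ m1, Tr T s1 ℓ m1 ∧ OptRel (Bisimilar T tau) m1 m2)

/-- The post-set of a transition, as a marking (multiset). -/
def mpost (m : Option S) : Multiset S :=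
  m.elim 0 (fun s => {s})

variable [DecidableEq S] [DecidableEq A]

/-- `Fires T m t m'` : transition `t` is enabled at marking `m` (`•t ∈ m`) and its
    firing produces `m' = (m ⊖ •t) ⊕ t•`. -/
def Fires (T : Finset (S × A × Option S)) (m : Multiset S) (t : S × A × Option S)
    (m' : Multiset S) : Prop :=
  t ∈ T ∧ t.1 ∈ m ∧ m' = m.erase t.1 + mpost t.2.2

/-- `MStep T m ℓ m'` : marking `m` evolves to `m'` by firing some `ℓ`-labeled transition. -/
def MStep (T : Finset (S × A × Option S)) (m : Multiset S) (ℓ : A) (m' : Multiset S) : Prop :=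
  ∃ t, Fires T m t m' ∧ t.2.1 = ℓ

/-- `Reach T m m'` : `m' ∈ reach(m)`, i.e. `m'` is reachable from `m` by a firing sequence. -/
def Reach (T : Finset (S × A × Option S)) : Multiset S → Multiset S → Prop :=
  Relation.ReflTransGen (fun m m' => ∃ t, Fires T m t m')

/-- The additive closure `R^⊕` of a place relation `R`, relating markings. -/
inductive AddClosure (R : S → S → Prop) : Multiset S → Multiset S → Prop
  | zero : AddClosure R 0 0
  | cons {s1 s2 : S} {m1 m2 : Multiset S} :
      R s1 s2 → AddClosure R m1 m2 → AddClosure R (s1 ::ₘ m1) (s2 ::ₘ m2)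

/-- The restricted net `N \ H`: all transitions with a label in `H` are pruned.
    (Places `s\H` of the restricted net are identified with the places `s` of `N`.) -/
def restrictNet (T : Finset (S × A × Option S)) (H : Finset A) : Finset (S × A × Option S) :=
  T.filter (fun t => t.2.1 ∉ H)

/-- `DNI T tau H m0` : for all markings `m1, m2` reachable from `m0` and every `h ∈ H`
    with `m1 →h m2`, the restricted markings are branching team equivalent in `N \ H`. -/
def DNI (T : Finset (S × A × Option S)) (tau : A) (H : Finset A) (m0 : Multiset S) : Prop :=
  ∀ m1 m2, Reach T m0 m1 → Reach T m0 m2 →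
    ∀ h ∈ H, MStep T m1 h m2 → AddClosure (Bisimilar (restrictNet T H) tau) m1 m2

/-- `FiresSeq T m σ m'` : the transition sequence `σ` can fire from `m` ending in `m'`. -/
inductive FiresSeq (T : Finset (S × A × Option S)) : Multiset S → List (S × A × Option S) → Multiset S → Prop
  | nil (m : Multiset S) : FiresSeq T m [] m
  | cons {m m' m'' : Multiset S} {t : S × A × Option S} {σ : List (S × A × Option S)} :
      Fires T m t m' → FiresSeq T m' σ m'' → FiresSeq T m (t :: σ) m''


private lemma sreach_trans {T : Finset (S × A × Option S)} {tau : A} {a b : S} {m : Option S}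
    (h1 : SilentReach T tau a (some b)) (h2 : SilentReach T tau b m) :
    SilentReach T tau a m := by
  induction h2 with
  | refl => exact h1
  | step h t ih => exact SilentReach.step ih t

private lemma silent_sim {T : Finset (S × A × Option S)} {tau : A} {R : S → S → Prop}
    (hR : IsBranchingBisim T tau R) {a b : S} {m : Option S}
    (h : SilentReach T tau a m) :
    ∀ a', m = some a' → R a b → ∃ b', SilentReach T tau b (some b') ∧ R a' b' := by
  induction h with
  | refl =>
    intro a' heq hr
    cases heq
    exact ⟨b, SilentReach.refl b, hr⟩
  | step h t ih =>
    intro a' heq hr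
    obtain ⟨b'', hb'', hr''⟩ := ih _ rfl hr
    subst heq
    rcases ((hR _ b'' hr'').1 tau (some a') t) with ⟨_, m2, hreach, hs, hm⟩ | ⟨s, m2, hreach, ht2, hrs, hm⟩
    · cases m2 with
      | none => exact absurd hm (by simp [OptRel])
      | some b' => exact ⟨b', sreach_trans hb'' hreach, hm⟩
    · cases m2 with
      | none => exact absurd hm (by simp [OptRel])
      | some b' => exact ⟨b', sreach_trans hb'' (SilentReach.step hreach ht2), hm⟩

private lemma optrel_flip {R : S → S → Prop} {m1 m2 : Option S} :
    OptRel (fun a b => R b a) m1 m2 ↔ OptRel R m2 m1 := by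
  cases m1 <;> cases m2 <;> simp [OptRel]

private lemma bisim_flip {T : Finset (S × A × Option S)} {tau : A} {R : S → S → Prop}
    (hR : IsBranchingBisim T tau R) : IsBranchingBisim T tau (fun a b => R b a) := by
  intro s1 s2 h
  obtain ⟨c1, c2⟩ := hR s2 s1 h
  constructor
  · intro ℓ m1 ht
    rcases c2 ℓ m1 ht with ⟨hl, m2, hr, ho1, ho2⟩ | ⟨s, m2, hr, ht2, hrs, ho⟩
    · exact Or.inl ⟨hl, m2, hr, optrel_flip.mpr ho1, optrel_flip.mpr ho2⟩
    · exact Or.inr ⟨s, m2, hr, ht2, hrs, optrel_flip.mpr ho⟩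
  · intro ℓ m2 ht
    rcases c1 ℓ m2 ht with ⟨hl, m1, hr, ho1, ho2⟩ | ⟨s, m1, hr, ht2, hrs, ho⟩
    · exact Or.inl ⟨hl, m1, hr, optrel_flip.mpr ho1, optrel_flip.mpr ho2⟩
    · exact Or.inr ⟨s, m1, hr, ht2, hrs, optrel_flip.mpr ho⟩

private lemma optrel_comp {R1 R2 : S → S → Prop} {m1 m' m2 : Option S}
    (h1 : OptRel R1 m1 m') (h2 : OptRel R2 m' m2) :
    OptRel (fun a b => ∃ c, R1 a c ∧ R2 c b) m1 m2 := by
  cases m1 <;> cases m' <;> cases m2 <;> simp_all [OptRel]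
  exact ⟨_, h1, h2⟩

private lemma comp_fwd {T : Finset (S × A × Option S)} {tau : A} {R1 R2 : S → S → Prop}
    (h1 : IsBranchingBisim T tau R1) (h2 : IsBranchingBisim T tau R2)
    {s1 s' s2 : S} (hr1 : R1 s1 s') (hr2 : R2 s' s2) :
    ∀ ℓ m1, Tr T s1 ℓ m1 →
      (ℓ = tau ∧ ∃ m2, SilentReach T tau s2 m2 ∧
        OptRel (fun a b => ∃ c, R1 a c ∧ R2 c b) (some s1) m2 ∧
        OptRel (fun a b => ∃ c, R1 a c ∧ R2 c b) m1 m2) ∨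
      (∃ s m2, SilentReach T tau s2 (some s) ∧ Tr T s ℓ m2 ∧
        (∃ c, R1 s1 c ∧ R2 c s) ∧
        OptRel (fun a b => ∃ c, R1 a c ∧ R2 c b) m1 m2) := by
  intro ℓ m1 ht
  rcases (h1 s1 s' hr1).1 ℓ m1 ht with ⟨hl, m', hreach, ho1, ho2⟩ | ⟨s, m', hreach, ht', hrs, ho⟩
  · -- silent case on R1 side
    cases m' with
    | none => exact absurd ho1 (by simp [OptRel])
    | some sA =>
      -- s' ⇒ε some sA, R1 s1 sA, OptRel R1 m1 (some sA)
      obtain ⟨s2', hs2', hr2'⟩ := silent_sim h2 hreach sA rfl hr2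
      refine Or.inl ⟨hl, some s2', hs2', ⟨sA, ho1, hr2'⟩, ?_⟩
      cases m1 with
      | none => exact absurd ho2 (by simp [OptRel])
      | some u => exact ⟨sA, ho2, hr2'⟩
  · -- visible-style case: s' ⇒ε some s, Tr s ℓ m', R1 s1 s, OptRel R1 m1 m'
    obtain ⟨s2a, hs2a, hr2a⟩ := silent_sim h2 hreach s rfl hr2
    rcases (h2 s s2a hr2a).1 ℓ m' ht' with ⟨hl, m2, hreach2, ho1, ho2⟩ | ⟨w, m2, hreach2, ht2, hrw, ho2⟩
    · cases m2 with
      | none => exact absurd ho1 (by simp [OptRel])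
      | some s2b =>
        refine Or.inl ⟨hl, some s2b, sreach_trans hs2a hreach2, ⟨s, hrs, ho1⟩, ?_⟩
        cases m1 with
        | none => exact absurd (optrel_comp ho ho2) (by simp [OptRel])
        | some u =>
          cases m' with
          | none => exact absurd ho (by simp [OptRel])
          | some v => exact ⟨v, ho, ho2⟩
    · exact Or.inr ⟨w, m2, sreach_trans hs2a hreach2, ht2, ⟨s, hrs, hrw⟩, optrel_comp ho ho2⟩

/-- The relational composition of two branching bisimulations is a
    branching bisimulation. -/
theorem comp_is_branching_bisim [Fintype S] [Fintype A]
    (T : Finset (S × A × Option S)) (tau : A) (R1 R2 : S → S → Prop)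
    (h1 : IsBranchingBisim T tau R1) (h2 : IsBranchingBisim T tau R2) :
    IsBranchingBisim T tau (fun s s'' => ∃ s', R1 s s' ∧ R2 s' s'') := by
  intro s1 s2 ⟨s', hr1, hr2⟩
  constructor
  · exact comp_fwd h1 h2 hr1 hr2
  · intro ℓ m2 ht
    rcases comp_fwd (bisim_flip h2) (bisim_flip h1) hr2 hr1 ℓ m2 ht with
      ⟨hl, m1, hreach, ho1, ho2⟩ | ⟨s, m1, hreach, ht1, hrs, ho⟩
    · refine Or.inl ⟨hl, m1, hreach, ?_, ?_⟩
      · cases m1 <;> simp_all [OptRel] <;> tauto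
      · cases m1 <;> cases m2 <;> simp_all [OptRel] <;> tauto
    · refine Or.inr ⟨s, m1, hreach, ht1, ?_, ?_⟩
      · tauto
      · cases m1 <;> cases m2 <;> simp_all [OptRel] <;> tauto
end

section
/- For every finite-state machine N = (S, A, T), branching bisimilarity ≈ on places is an equivalence relation (reflexive, symmetric, and transitive). -/
/- Common framework: finite-state machines (FSMs) in the sense of Gorrieri.
   Places form a type `S`, labels a type `A` with a distinguished silent label `tau`.
   A transition is a triple `(s, ℓ, m) : S × A × Option S`, where the post-set `m`
   is either a single place (`some s'`) or the empty marking θ (`none`).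
   An FSM is given by a finite set `T` of such transitions. -/

variable {S A : Type*}

variable [DecidableEq S] [DecidableEq A]

section Aux

variable {T : Finset (S × A × Option S)} {tau : A}

lemma SilentReach.trans {s s' : S} {m : Option S}
    (h1 : SilentReach T tau s (some s')) (h2 : SilentReach T tau s' m) :
    SilentReach T tau s m := by
  induction h2 with
  | refl => exact h1
  | step h t ih => exact SilentReach.step ih t

lemma optRel_refl (m : Option S) : OptRel (fun a b : S => a = b) m m := by
  cases m <;> simp [OptRel]

lemma optRel_flip {R : S → S → Prop} {a b : Option S} (h : OptRel R a b) :
    OptRel (flip R) b a := by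
  cases a <;> cases b <;> simpa [OptRel, flip] using h

/-- Composition of relations. -/
def Comp (R1 R2 : S → S → Prop) (a c : S) : Prop := ∃ b, R1 a b ∧ R2 b c

lemma optRel_comp {R1 R2 : S → S → Prop} {a b c : Option S}
    (h1 : OptRel R1 a b) (h2 : OptRel R2 b c) : OptRel (Comp R1 R2) a c := by
  cases a <;> cases b <;> cases c <;> simp_all [OptRel, Comp]
  exact ⟨_, h1, h2⟩

lemma optRel_comp_flip {R1 R2 : S → S → Prop} {a b : Option S}
    (h : OptRel (Comp (flip R2) (flip R1)) a b) : OptRel (Comp R1 R2) b a := by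
  cases a <;> cases b <;> simp_all [OptRel, Comp, flip]
  obtain ⟨t, h1, h2⟩ := h
  exact ⟨t, h2, h1⟩

lemma isBisim_flip {R : S → S → Prop} (h : IsBranchingBisim T tau R) :
    IsBranchingBisim T tau (flip R) := by
  intro s1 s2 hR
  obtain ⟨c1, c2⟩ := h s2 s1 hR
  constructor
  · intro ℓ m1 htr
    rcases c2 ℓ m1 htr with ⟨hτ, m2, hsr, ho1, ho2⟩ | ⟨s, m2, hsr, htr', hR', ho⟩
    · exact Or.inl ⟨hτ, m2, hsr, optRel_flip ho1, optRel_flip ho2⟩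
    · exact Or.inr ⟨s, m2, hsr, htr', hR', optRel_flip ho⟩
  · intro ℓ m2 htr
    rcases c1 ℓ m2 htr with ⟨hτ, m1, hsr, ho1, ho2⟩ | ⟨s, m1, hsr, htr', hR', ho⟩
    · exact Or.inl ⟨hτ, m1, hsr, optRel_flip ho1, optRel_flip ho2⟩
    · exact Or.inr ⟨s, m1, hsr, htr', hR', optRel_flip ho⟩

/-- Stuttering lemma: a silent reach on the left can be matched on the right. -/
lemma stutter {R : S → S → Prop} (hB : IsBranchingBisim T tau R)
    {t u : S} {m : Option S} (hR : R t u) (hsr : SilentReach T tau t m) :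
    ∃ m', SilentReach T tau u m' ∧ OptRel R m m' := by
  induction hsr with
  | refl => exact ⟨some u, SilentReach.refl u, hR⟩
  | @step s' m hsr' htr ih =>
    obtain ⟨m'', hsr'', ho⟩ := ih
    cases m'' with
    | none => exact absurd ho (by simp [OptRel])
    | some u' =>
      have hR' : R s' u' := ho
      rcases (hB s' u' hR').1 tau m htr with ⟨_, m2, hsr2, _, ho2⟩ | ⟨v, m2, hsr2, htr2, _, ho2⟩
      · exact ⟨m2, SilentReach.trans hsr'' hsr2, ho2⟩
      · exact ⟨m2, SilentReach.step (SilentReach.trans hsr'' hsr2) htr2, ho2⟩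

/-- Forward clause for the composition of two branching bisimulations. -/
lemma comp_forward {R1 R2 : S → S → Prop}
    (h1 : IsBranchingBisim T tau R1) (h2 : IsBranchingBisim T tau R2)
    {s1 t u : S} (hR1 : R1 s1 t) (hR2 : R2 t u) :
    ∀ ℓ m1, Tr T s1 ℓ m1 →
      (ℓ = tau ∧ ∃ m2, SilentReach T tau u m2 ∧ OptRel (Comp R1 R2) (some s1) m2 ∧
        OptRel (Comp R1 R2) m1 m2) ∨
      (∃ s m2, SilentReach T tau u (some s) ∧ Tr T s ℓ m2 ∧ Comp R1 R2 s1 s ∧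
        OptRel (Comp R1 R2) m1 m2) := by
  intro ℓ m1 htr
  rcases (h1 s1 t hR1).1 ℓ m1 htr with ⟨hτ, m, hsr, ho1, ho2⟩ | ⟨s, m, hsr, htr', hR', ho⟩
  · obtain ⟨m', hsr', ho'⟩ := stutter h2 hR2 hsr
    exact Or.inl ⟨hτ, m', hsr', optRel_comp ho1 ho', optRel_comp ho2 ho'⟩
  · obtain ⟨m'', hsr'', ho''⟩ := stutter h2 hR2 hsr
    cases m'' with
    | none => exact absurd ho'' (by simp [OptRel])
    | some v =>
      have hR2' : R2 s v := ho''
      rcases (h2 s v hR2').1 ℓ m htr' with ⟨hτ, m2, hsr2, ho1, ho2⟩ | ⟨w, m2, hsr2, htr2, hRw, ho2⟩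
      · refine Or.inl ⟨hτ, m2, SilentReach.trans hsr'' hsr2, ?_, optRel_comp ho ho2⟩
        exact optRel_comp (show OptRel R1 (some s1) (some s) from hR') ho1
      · exact Or.inr ⟨w, m2, SilentReach.trans hsr'' hsr2, htr2, ⟨s, hR', hRw⟩,
          optRel_comp ho ho2⟩

lemma isBisim_comp {R1 R2 : S → S → Prop}
    (h1 : IsBranchingBisim T tau R1) (h2 : IsBranchingBisim T tau R2) :
    IsBranchingBisim T tau (Comp R1 R2) := by
  intro s1 s2 ⟨t, hR1, hR2⟩
  constructor
  · exact comp_forward h1 h2 hR1 hR2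
  · intro ℓ m2 htr
    have h1' := isBisim_flip h1
    have h2' := isBisim_flip h2
    rcases comp_forward h2' h1' (show flip R2 s2 t from hR2) (show flip R1 t s1 from hR1)
        ℓ m2 htr with ⟨hτ, m1, hsr, ho1, ho2⟩ | ⟨s, m1, hsr, htr', ⟨w, hw1, hw2⟩, ho⟩
    · exact Or.inl ⟨hτ, m1, hsr, optRel_comp_flip ho1, optRel_comp_flip ho2⟩
    · exact Or.inr ⟨s, m1, hsr, htr', ⟨w, hw2, hw1⟩, optRel_comp_flip ho⟩

end Aux

/-- Branching bisimilarity `≈` on places is an equivalence relation. -/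
theorem bisimilar_equivalence [Fintype S] [Fintype A]
    (T : Finset (S × A × Option S)) (tau : A) :
    Equivalence (Bisimilar T tau) := by
  refine ⟨?_, ?_, ?_⟩
  · intro s
    refine ⟨fun a b => a = b, ?_, rfl⟩
    intro s1 s2 h
    subst h
    constructor
    · intro ℓ m1 htr
      exact Or.inr ⟨s1, m1, SilentReach.refl s1, htr, rfl, optRel_refl m1⟩
    · intro ℓ m2 htr
      exact Or.inr ⟨s1, m2, SilentReach.refl s1, htr, rfl, optRel_refl m2⟩
  · rintro s s' ⟨R, hB, hR⟩
    exact ⟨flip R, isBisim_flip hB, hR⟩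
  · rintro a b c ⟨R1, h1, hR1⟩ ⟨R2, h2, hR2⟩
    exact ⟨Comp R1 R2, isBisim_comp h1 h2, b, hR1, hR2⟩
end

section
/- Subtractivity of the additive closure: if R ⊆ S × S is an equivalence relation, then R^⊕ is subtractive, i.e., if (m1 ⊕ m1', m2 ⊕ m2') ∈ R^⊕ and (m1, m2) ∈ R^⊕, then (m1', m2') ∈ R^⊕. -/
/- Common framework: finite-state machines (FSMs) in the sense of Gorrieri.
   Places form a type `S`, labels a type `A` with a distinguished silent label `tau`.
   A transition is a triple `(s, ℓ, m) : S × A × Option S`, where the post-set `m`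
   is either a single place (`some s'`) or the empty marking θ (`none`).
   An FSM is given by a finite set `T` of such transitions. -/

variable {S A : Type*}

variable [DecidableEq S] [DecidableEq A]

theorem addClosure_iff_rel (R : S → S → Prop) (m n : Multiset S) :
    AddClosure R m n ↔ Multiset.Rel R m n := by
  constructor
  · intro h; induction h with
    | zero => exact Multiset.Rel.zero
    | cons hr _ ih => exact Multiset.Rel.cons hr ih
  · intro h; induction h with
    | zero => exact AddClosure.zero
    | cons hr _ ih => exact AddClosure.cons hr ih

theorem rel_cons_congr (R : S → S → Prop) (hR : Equivalence R) {m c : Multiset S} {x y : S}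
    (hxy : R x y) (h : Multiset.Rel R m (x ::ₘ c)) : Multiset.Rel R m (y ::ₘ c) := by
  rw [Multiset.rel_cons_right] at h ⊢
  obtain ⟨a, m', hax, hrel, rfl⟩ := h
  exact ⟨a, m', hR.trans hax hxy, hrel, rfl⟩

theorem rel_cancel (R : S → S → Prop) (hR : Equivalence R) {m n : Multiset S} {a b : S}
    (hab : R a b) (h : Multiset.Rel R (a ::ₘ m) (b ::ₘ n)) : Multiset.Rel R m n := by
  rw [Multiset.rel_cons_left] at h
  obtain ⟨b', n', hab', hrel, heq⟩ := h
  rcases Multiset.cons_eq_cons.mp heq with ⟨rfl, rfl⟩ | ⟨hne, c, rfl, rfl⟩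
  · exact hrel
  · exact rel_cons_congr R hR (hR.trans (hR.symm hab) hab') hrel

/-- Subtractivity: if `R` is an equivalence relation, then `R^⊕` is
    subtractive. -/
theorem addClosure_subtractive (R : S → S → Prop) (hR : Equivalence R)
    {m1 m2 m1' m2' : Multiset S}
    (h : AddClosure R (m1 + m1') (m2 + m2')) (h1 : AddClosure R m1 m2) :
    AddClosure R m1' m2' := by
  rw [addClosure_iff_rel] at h ⊢
  rw [addClosure_iff_rel] at h1
  induction h1 with
  | zero => simpa using h
  | cons hr _ ih =>
      simp only [Multiset.cons_add] at h
      exact ih (rel_cancel R hR hr h)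
end

section
/- If R ⊆ S × S is an equivalence relation on places, then its additive closure R^⊕ is an equivalence relation on markings. -/
/- Common framework: finite-state machines (FSMs) in the sense of Gorrieri.
   Places form a type `S`, labels a type `A` with a distinguished silent label `tau`.
   A transition is a triple `(s, ℓ, m) : S × A × Option S`, where the post-set `m`
   is either a single place (`some s'`) or the empty marking θ (`none`).
   An FSM is given by a finite set `T` of such transitions. -/

variable {S A : Type*}

variable [DecidableEq S] [DecidableEq A]

/-- The additive closure of an equivalence relation on places is an
    equivalence relation on markings. -/
theorem addClosure_equivalence (R : S → S → Prop) (hR : Equivalence R) :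
    Equivalence (AddClosure R) := by
  have key : ∀ m1 m2, AddClosure R m1 m2 ↔ Multiset.Rel R m1 m2 := by
    intro m1 m2
    constructor
    · intro h
      induction h with
      | zero => exact Multiset.Rel.zero
      | cons hr _ ih => exact Multiset.Rel.cons hr ih
    · intro h
      induction h with
      | zero => exact AddClosure.zero
      | cons hr _ ih => exact AddClosure.cons hr ih
  have : IsTrans S R := ⟨fun _ _ _ => hR.trans⟩
  refine ⟨?_, ?_, ?_⟩
  · intro m
    exact (key m m).2 (Multiset.rel_refl_of_refl_on fun x _ => hR.refl x)
  · intro m1 m2 h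
    induction h with
    | zero => exact AddClosure.zero
    | cons hr _ ih => exact AddClosure.cons (hR.symm hr) ih
  · intro m1 m2 m3 h1 h2
    exact (key _ _).2 (Multiset.Rel.trans R ((key _ _).1 h1) ((key _ _).1 h2))
end

section
/- Branching bisimilarity is a congruence with respect to restriction: given a finite-state machine N = (S, A, T) and a set H ⊆ A of high labels with τ ∉ H, if s1 ≈ s2 in N, then s1\H ≈ s2\H in the restricted net N\H. -/
/- Common framework: finite-state machines (FSMs) in the sense of Gorrieri.
   Places form a type `S`, labels a type `A` with a distinguished silent label `tau`.
   A transition is a triple `(s, ℓ, m) : S × A × Option S`, where the post-set `m`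
   is either a single place (`some s'`) or the empty marking θ (`none`).
   An FSM is given by a finite set `T` of such transitions. -/

variable {S A : Type*}

variable [DecidableEq S] [DecidableEq A]

lemma silentReach_restrict {T : Finset (S × A × Option S)} {tau : A} {H : Finset A}
    [DecidableEq S] [DecidableEq A] (htau : tau ∉ H) {s : S} {m : Option S}
    (h : SilentReach T tau s m) : SilentReach (restrictNet T H) tau s m := by
  induction h with
  | refl => exact SilentReach.refl _
  | step h1 h2 ih =>
      exact SilentReach.step ih (Finset.mem_filter.2 ⟨h2, htau⟩)

/-- Branching bisimilarity is a congruence w.r.t. restriction: if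
    `s1 ≈ s2` in `N`, then `s1\H ≈ s2\H` in the restricted net `N \ H`
    (restricted places being identified with the original ones). -/
theorem bisimilar_congruence_restriction [Fintype S] [Fintype A]
    [DecidableEq S] [DecidableEq A]
    (T : Finset (S × A × Option S)) (tau : A) (H : Finset A) (htau : tau ∉ H)
    {s1 s2 : S} (h : Bisimilar T tau s1 s2) :
    Bisimilar (restrictNet T H) tau s1 s2 := by
  obtain ⟨R, hR, hs⟩ := h
  refine ⟨R, ?_, hs⟩
  intro a b hab
  obtain ⟨h1, h2⟩ := hR a b hab
  constructor
  · intro ℓ m1 htr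
    obtain ⟨htr', hℓ⟩ := Finset.mem_filter.1 htr
    rcases h1 ℓ m1 htr' with ⟨rfl, m2, hre, hr1, hr2⟩ | ⟨s, m2, hre, htr2, hr1, hr2⟩
    · exact Or.inl ⟨rfl, m2, silentReach_restrict htau hre, hr1, hr2⟩
    · exact Or.inr ⟨s, m2, silentReach_restrict htau hre,
        Finset.mem_filter.2 ⟨htr2, hℓ⟩, hr1, hr2⟩
  · intro ℓ m2 htr
    obtain ⟨htr', hℓ⟩ := Finset.mem_filter.1 htr
    rcases h2 ℓ m2 htr' with ⟨rfl, m1, hre, hr1, hr2⟩ | ⟨s, m1, hre, htr2, hr1, hr2⟩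
    · exact Or.inl ⟨rfl, m1, silentReach_restrict htau hre, hr1, hr2⟩
    · exact Or.inr ⟨s, m1, silentReach_restrict htau hre,
        Finset.mem_filter.2 ⟨htr2, hℓ⟩, hr1, hr2⟩
end

section
/- Transfer property of branching team equivalence for visible moves: in a finite-state machine, if m1 ≈^⊕ m2 and m1[t1⟩m1' with l(t1) ≠ τ, then there exist a (possibly empty) silent transition sequence σ, a transition t2, and markings m, m2' such that σ t2 is sequential, l(t2) = l(t1), •t1 ≈ •t2, t1• ≈^⊕ t2•, m2[σ⟩m[t2⟩m2', m1 ≈^⊕ m, and m1' ≈^⊕ m2'. -/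
/-! A visible move of `m1` fires from one token `•t1`; matching it with a bisimilar token `s2` of
`m2`, the branching bisimulation answers with a silent path `s2 ⇒ε s` followed by an equally
labelled transition from `s`. In an FSM every transition consumes one token and produces at most
one, so this path fires sequentially on `m2` while the remaining tokens stay put, still matched
with the remaining tokens of `m1`. -/

/- Common framework: finite-state machines (FSMs) in the sense of Gorrieri.
   Places form a type `S`, labels a type `A` with a distinguished silent label `tau`.
   A transition is a triple `(s, ℓ, m) : S × A × Option S`, where the post-set `m`
   is either a single place (`some s'`) or the empty marking θ (`none`).
   An FSM is given by a finite set `T` of such transitions. -/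

variable {S A : Type*}

variable [DecidableEq S] [DecidableEq A]

section

omit [DecidableEq S] [DecidableEq A]

theorem OptRel.mono {R R' : S → S → Prop} (h : ∀ a b, R a b → R' a b) :
    ∀ {p q : Option S}, OptRel R p q → OptRel R' p q
  | some a, some b, hab => h a b hab
  | none, none, _ => trivial

namespace AddClosure

variable {R : S → S → Prop}

theorem add {a b c d : Multiset S} (hab : AddClosure R a b) (hcd : AddClosure R c d) :
    AddClosure R (a + c) (b + d) := by
  induction hab with
  | zero => simpa using hcd
  | cons hR _ ih => simpa only [Multiset.cons_add] using cons hR ih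

theorem mpost_of_optRel : ∀ {p q : Option S}, OptRel R p q → AddClosure R (mpost p) (mpost q)
  | some _, some _, h => cons (R := R) h zero
  | none, none, _ => zero

end AddClosure

theorem Bisimilar.transfer_visible {T : Finset (S × A × Option S)} {tau ℓ : A} {s1 s2 : S}
    {p : Option S} (h : Bisimilar T tau s1 s2) (hp : Tr T s1 ℓ p) (hℓ : ℓ ≠ tau) :
    ∃ s q, SilentReach T tau s2 (some s) ∧ Tr T s ℓ q ∧
      Bisimilar T tau s1 s ∧ OptRel (Bisimilar T tau) p q := by
  obtain ⟨R, hR, hs⟩ := h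
  rcases (hR s1 s2 hs).1 ℓ p hp with ⟨hτ, -⟩ | ⟨s, q, hreach, hq, hs1s, hpq⟩
  · exact absurd hτ hℓ
  · exact ⟨s, q, hreach, hq, ⟨R, hR, hs1s⟩, hpq.mono fun a b hab => ⟨R, hR, hab⟩⟩

end

section

omit [DecidableEq A]

theorem AddClosure.exists_mem_erase {R : S → S → Prop} {m1 m2 : Multiset S}
    (h : AddClosure R m1 m2) {s1 : S} (hs1 : s1 ∈ m1) :
    ∃ s2 ∈ m2, R s1 s2 ∧ AddClosure R (m1.erase s1) (m2.erase s2) := by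
  induction h with
  | zero => simp at hs1
  | @cons a b n1 n2 hab hn ih =>
    by_cases he : s1 = a
    · subst he
      exact ⟨b, Multiset.mem_cons_self _ _, hab, by simpa using hn⟩
    · have hs1' : s1 ∈ n1 := (Multiset.mem_cons.1 hs1).resolve_left he
      obtain ⟨s2, hs2, hR, hrest⟩ := ih hs1'
      refine ⟨s2, Multiset.mem_cons_of_mem hs2, hR, ?_⟩
      rw [Multiset.erase_cons_tail_of_mem hs1', Multiset.erase_cons_tail_of_mem hs2]
      exact cons hab hrest

variable {T : Finset (S × A × Option S)}

theorem fires_cons {t : S × A × Option S} (ht : t ∈ T) (rest : Multiset S) :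
    Fires T (t.1 ::ₘ rest) t (rest + mpost t.2.2) :=
  ⟨ht, Multiset.mem_cons_self _ _, by simp⟩

theorem FiresSeq.concat {m m' m'' : Multiset S} {σ : List (S × A × Option S)}
    {t : S × A × Option S} (hσ : FiresSeq T m σ m') (ht : Fires T m' t m'') :
    FiresSeq T m (σ ++ [t]) m'' := by
  induction hσ with
  | nil => exact cons ht (nil _)
  | cons hf _ ih => exact cons hf (ih ht)

theorem SilentReach.exists_silent_firesSeq {tau : A} {a b : S}
    (h : SilentReach T tau a (some b)) :
    ∃ σ : List (S × A × Option S), (∀ t ∈ σ, t.2.1 = tau) ∧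
      -- `σ` is sequential and ends in `b`, phrased so that it also covers `σ = []`
      (∀ x : S × A × Option S, x.1 = b →
        List.IsChain (fun t t' => t.2.2 = some t'.1) (σ ++ [x])) ∧
      ∀ rest, FiresSeq T (a ::ₘ rest) σ (b ::ₘ rest) := by
  generalize hb : some b = mb at h
  induction h generalizing b with
  | refl => cases hb; exact ⟨[], by simp, fun _ _ => .singleton _, fun _ => .nil _⟩
  | @step s' _ _ hs' ih =>
    subst hb
    obtain ⟨σ, hsil, hchain, hfires⟩ := ih rfl
    refine ⟨σ ++ [(s', tau, some b)], ?_, ?_, ?_⟩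
    · simpa [or_imp, forall_and] using hsil
    · intro x hx
      rw [List.append_assoc, List.singleton_append, List.isChain_append_cons_cons]
      exact ⟨hchain _ rfl, by rw [hx], .singleton _⟩
    · intro rest
      refine (hfires rest).concat ?_
      rw [← Multiset.singleton_add b, add_comm]
      exact fires_cons (t := (s', tau, some b)) hs' rest

end

theorem team_transfer_visible_general (T : Finset (S × A × Option S)) (tau : A)
    {m1 m2 m1' : Multiset S} {t1 : S × A × Option S}
    (hbis : AddClosure (Bisimilar T tau) m1 m2)
    (hfire : Fires T m1 t1 m1') (hvis : t1.2.1 ≠ tau) :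
    ∃ (σ : List (S × A × Option S)) (t2 : S × A × Option S) (m m2' : Multiset S),
      List.Chain' (fun a b => a.2.2 = some b.1) (σ ++ [t2]) ∧
      (∀ t ∈ σ, t.2.1 = tau) ∧
      t2.2.1 = t1.2.1 ∧
      Bisimilar T tau t1.1 t2.1 ∧
      OptRel (Bisimilar T tau) t1.2.2 t2.2.2 ∧
      FiresSeq T m2 σ m ∧ Fires T m t2 m2' ∧
      AddClosure (Bisimilar T tau) m1 m ∧
      AddClosure (Bisimilar T tau) m1' m2' := by
  obtain ⟨s1, ℓ, p⟩ := t1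
  obtain ⟨ht1, hs1, rfl⟩ := hfire
  obtain ⟨s2, hs2, hs12, hrest⟩ := hbis.exists_mem_erase hs1
  obtain ⟨s, q, hreach, hq, hs1s, hpq⟩ := hs12.transfer_visible ht1 hvis
  obtain ⟨σ, hsil, hchain, hfires⟩ := hreach.exists_silent_firesSeq
  refine ⟨σ, (s, ℓ, q), s ::ₘ m2.erase s2, m2.erase s2 + mpost q, hchain _ rfl, hsil, rfl,
    hs1s, hpq, ?_, fires_cons hq _, ?_, hrest.add (.mpost_of_optRel hpq)⟩
  · simpa [Multiset.cons_erase hs2] using hfires (m2.erase s2)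
  · simpa [Multiset.cons_erase hs1] using hrest.cons hs1s

/-- Transfer property of branching team equivalence for visible moves:
    if `m1 ≈^⊕ m2` and `m1 [t1⟩ m1'` with `l(t1) ≠ τ`, then there are a silent transition
    sequence `σ`, a transition `t2`, and markings `m`, `m2'` such that `σ t2` is
    sequential, `l(t2) = l(t1)`, `•t1 ≈ •t2`, `t1• ≈^⊕ t2•`, `m2 [σ⟩ m [t2⟩ m2'`,
    `m1 ≈^⊕ m` and `m1' ≈^⊕ m2'`. -/
theorem team_transfer_visible [Fintype S] [Fintype A] [DecidableEq S] [DecidableEq A]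
    (T : Finset (S × A × Option S)) (tau : A)
    {m1 m2 m1' : Multiset S} {t1 : S × A × Option S}
    (hbis : AddClosure (Bisimilar T tau) m1 m2)
    (hfire : Fires T m1 t1 m1') (hvis : t1.2.1 ≠ tau) :
    ∃ (σ : List (S × A × Option S)) (t2 : S × A × Option S) (m m2' : Multiset S),
      List.Chain' (fun a b => a.2.2 = some b.1) (σ ++ [t2]) ∧
      (∀ t ∈ σ, t.2.1 = tau) ∧
      t2.2.1 = t1.2.1 ∧
      Bisimilar T tau t1.1 t2.1 ∧
      OptRel (Bisimilar T tau) t1.2.2 t2.2.2 ∧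
      FiresSeq T m2 σ m ∧ Fires T m t2 m2' ∧
      AddClosure (Bisimilar T tau) m1 m ∧
      AddClosure (Bisimilar T tau) m1' m2' :=
  team_transfer_visible_general T tau hbis hfire hvis
end
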